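/- arXiv:1608.01110 — 2 statements merged into one kernel-verified Lean document; each statement's English description precedes it below -/
import Mathlib

section
/- Let 𝒩 be a nonempty set, k a field of characteristic 0, K = k((ε)), φ : 𝒩 → k extended additively to words, and T the K-valued mould with T^∅ = 1 and T^{n₁⋯n_r}(ε) = 1/((φ(n₁)+ε)⋯(φ(n₁)+⋯+φ(n_r)+rε)). Let (U_-, U_+) be the Birkhoff decomposition of T and define the k-valued mould R by R^{n̲} := −r(n̲) · (residue of U_-^{n̲}). Then for every word n̲ with φ(n̲) ≠ 0, one has U_-^{n̲} = 0 and R^{n̲} = 0. -/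
/-! Write `r(n)` for the length of a word. Dropping the last letter `n ↦ n'` gives
`(φ(n) + r(n) ε) T^n = T^{n'}`. One proves by induction on words, simultaneously, that `U₋`
vanishes on nonresonant prefixes and that `U₋ × (r ε)^m T` is `K₊`-valued for every `m`
(for `m = 0` it is `U₊`). For `n = n' x`, let `Z_m` be the part of `(U₋ × (r ε)^m T)^n` coming
from proper prefixes `a` of `n`: those with `φ(a) ≠ 0` contribute nothing, and for the others
the remaining suffix has `φ` equal to `φ(n)`, so the relation above and the binomial theorem
applied to the statement for `n'` give `φ(n) Z_m + Z_{m+1} ∈ K₊`. The factor `ε^m` puts `Z_m`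
in `K₊` for large `m`, so when `φ(n) ≠ 0` every `Z_m` lies in `K₊`, whence
`U₋^n = U₊^n - Z_0 ∈ K₊ ∩ K₋ = 0`. -/

open scoped Classical

/-- Shuffle coefficient: the number of ways the word `n` can be obtained by interleaving
the letters of `a` and `b` while preserving their internal orders. -/
noncomputable def sh {𝒩 : Type*} : List 𝒩 → List 𝒩 → List 𝒩 → ℕ
  | [], b, n => if b = n then 1 else 0
  | a, [], n => if a = n then 1 else 0
  | _ :: _, _ :: _, [] => 0
  | x :: a, y :: b, z :: n =>
      (if x = z then sh a (y :: b) n else 0) + (if y = z then sh (x :: a) b n else 0)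

/-- Mould multiplication: `(M × N)^n = ∑_{n = a b} M^a N^b`. -/
noncomputable def mmul {𝒩 A : Type*} [Semiring A] (M N : List 𝒩 → A) : List 𝒩 → A :=
  fun n => ∑ i ∈ Finset.range (n.length + 1), M (n.take i) * N (n.drop i)

/-- The unit mould `𝟙`. -/
noncomputable def munit {𝒩 A : Type*} [Semiring A] : List 𝒩 → A :=
  fun n => if n = [] then 1 else 0

/-- Membership in `K_- = ε⁻¹ k[ε⁻¹]`: all coefficients of nonnegative powers vanish. -/
def Kminus {k : Type*} [Field k] (f : LaurentSeries k) : Prop :=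
  ∀ n : ℤ, 0 ≤ n → f.coeff n = 0

/-- Membership in `K_+ = k[[ε]]`: all coefficients of negative powers vanish. -/
def Kplus {k : Type*} [Field k] (f : LaurentSeries k) : Prop :=
  ∀ n : ℤ, n < 0 → f.coeff n = 0

/-- Additive extension of `φ : 𝒩 → k` to words: `φ(n₁⋯n_r) = φ(n₁) + ⋯ + φ(n_r)`. -/
def phiw {𝒩 k : Type*} [AddCommMonoid k] (φ : 𝒩 → k) (l : List 𝒩) : k :=
  (l.map φ).sum

/-- The mould `I`: value `1` on words of length `1`, and `0` otherwise. -/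
noncomputable def Imould {𝒩 A : Type*} [Semiring A] : List 𝒩 → A :=
  fun n => if n.length = 1 then 1 else 0

/-- The indeterminate `ε` of `K = k((ε))`. -/
noncomputable def eps (k : Type*) [Field k] : LaurentSeries k :=
  HahnSeries.single (1 : ℤ) (1 : k)

/-- The mould `T`: `T^∅ = 1` and
`T^{n₁⋯n_r}(ε) = 1/((φ(n₁)+ε)(φ(n₁)+φ(n₂)+2ε)⋯(φ(n₁)+⋯+φ(n_r)+rε))`. -/
noncomputable def Tdef {𝒩 k : Type*} [Field k] (φ : 𝒩 → k) (l : List 𝒩) :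
    LaurentSeries k :=
  (∏ i ∈ Finset.range l.length,
      ((HahnSeries.C (phiw φ (l.take (i + 1))) : LaurentSeries k) + (i + 1 : ℕ) • eps k))⁻¹

open LaurentSeries Filter Finset

section PowerSeriesSubring

variable {k : Type*} [Field k]

theorem kplus_iff_mem_powerSeries {f : LaurentSeries k} :
    Kplus f ↔ f ∈ powerSeries_as_subring k := by
  simp only [Subring.mem_map, Subring.mem_top, true_and]
  constructor
  · intro hf
    refine ⟨PowerSeries.mk fun n => f.coeff n, ?_⟩
    ext n
    rw [PowerSeries.coeff_coe]
    split_ifs with hn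
    · exact (hf n hn).symm
    · rw [PowerSeries.coeff_mk, Int.natAbs_of_nonneg (not_lt.1 hn)]
  · rintro ⟨F, rfl⟩ n hn
    rw [PowerSeries.coeff_coe, if_pos hn]

theorem C_mem_powerSeries (a : k) : HahnSeries.C a ∈ powerSeries_as_subring k :=
  ⟨PowerSeries.C a, trivial, HahnSeries.ofPowerSeries_C a⟩

theorem eps_mem_powerSeries : eps k ∈ powerSeries_as_subring k :=
  ⟨PowerSeries.X, trivial, HahnSeries.ofPowerSeries_X⟩

theorem eq_zero_of_kplus_of_kminus {f : LaurentSeries k} (hp : Kplus f) (hm : Kminus f) :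
    f = 0 := by
  ext n
  rcases lt_or_ge n 0 with hn | hn
  exacts [hp n hn, hm n hn]

theorem eventually_mul_eps_pow_mem_powerSeries (f : LaurentSeries k) :
    ∀ᶠ n : ℕ in atTop, f * eps k ^ n ∈ powerSeries_as_subring k := by
  filter_upwards [eventually_ge_atTop (-f.order).toNat] with n hn
  rw [← kplus_iff_mem_powerSeries]
  intro i hi
  rw [eps, HahnSeries.single_pow, one_pow, HahnSeries.coeff_mul_single, mul_one]
  apply HahnSeries.coeff_eq_zero_of_lt_order
  have := Int.self_le_toNat (-f.order)
  simp only [nsmul_eq_mul, mul_one]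
  omega

theorem C_add_nsmul_eps_ne_zero [CharZero k] (a : k) {n : ℕ} (hn : n ≠ 0) :
    HahnSeries.C a + n • eps k ≠ 0 := by
  intro h
  have := congrArg (HahnSeries.coeff · 1) h
  rw [HahnSeries.coeff_add, HahnSeries.coeff_nsmul, HahnSeries.C_apply,
    HahnSeries.coeff_single_of_ne one_ne_zero, eps, Pi.smul_apply, HahnSeries.coeff_single_same,
    HahnSeries.coeff_zero, zero_add, nsmul_one, Nat.cast_eq_zero] at this
  exact hn this

end PowerSeriesSubring

section Subring

variable {R : Type*}

theorem Subring.sum_mul_add_pow_mem [CommRing R] (S : Subring R) {ι : Type*} (s : Finset ι)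
    (X w : ι → R) {e : R} (he : e ∈ S) (h : ∀ m, ∑ q ∈ s, X q * w q ^ m ∈ S) (m : ℕ) :
    ∑ q ∈ s, X q * (w q + e) ^ m ∈ S := by
  have expand : ∑ q ∈ s, X q * (w q + e) ^ m
      = ∑ i ∈ range (m + 1), (∑ q ∈ s, X q * w q ^ i) * (e ^ (m - i) * (m.choose i : R)) := by
    simp only [add_pow, mul_sum, sum_mul]
    rw [sum_comm]
    refine sum_congr rfl fun i _ => sum_congr rfl fun q _ => ?_
    ring
  rw [expand]
  exact S.sum_mem fun i _ => S.mul_mem (h i) (S.mul_mem (S.pow_mem he _) (natCast_mem S _))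

theorem Subring.mem_of_mul_add_succ_mem [Ring R] (S : Subring R) {c u : R} (hu : u ∈ S)
    (huc : u * c = 1) {Z : ℕ → R} (hZ : ∀ m, c * Z m + Z (m + 1) ∈ S)
    (hev : ∀ᶠ m in atTop, Z m ∈ S) (m : ℕ) : Z m ∈ S := by
  have step : ∀ m, Z (m + 1) ∈ S → Z m ∈ S := fun m h => by
    have : Z m = u * (c * Z m + Z (m + 1)) - u * Z (m + 1) := by
      rw [mul_add, ← mul_assoc, huc, one_mul, add_sub_cancel_right]
    rw [this]
    exact S.sub_mem (S.mul_mem hu (hZ m)) (S.mul_mem hu h)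
  obtain ⟨N, hN⟩ := eventually_atTop.1 hev
  exact Nat.decreasingInduction (motive := fun j _ => Z j ∈ S) (fun j _ h => step j h)
    (hN _ (le_max_left N m)) (le_max_right N m)

end Subring

section Moulds

variable {𝒩 k : Type*} [Field k] (φ : 𝒩 → k)

noncomputable def properMmul {A : Type*} [Semiring A] (M N : List 𝒩 → A) (w : List 𝒩) : A :=
  ∑ q ∈ range w.length, M (w.take q) * N (w.drop q)

theorem phiw_append (a b : List 𝒩) : phiw φ (a ++ b) = phiw φ a + phiw φ b := by
  simp [phiw]

@[simp]
theorem Tdef_nil : Tdef φ ([] : List 𝒩) = 1 := by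
  simp [Tdef]

theorem Tdef_concat (b : List 𝒩) (x : 𝒩) :
    Tdef φ (b ++ [x]) =
      Tdef φ b * (HahnSeries.C (phiw φ (b ++ [x])) + (b.length + 1) • eps k)⁻¹ := by
  rw [Tdef, Tdef, List.length_append, List.length_singleton, prod_range_succ, mul_inv,
    List.take_of_length_le (by simp)]
  congr 2
  refine prod_congr rfl fun i hi => ?_
  rw [List.take_append_of_le_length (by simpa using hi)]

theorem Tdef_concat_mul [CharZero k] (b : List 𝒩) (x : 𝒩) :
    Tdef φ (b ++ [x]) * (HahnSeries.C (phiw φ (b ++ [x])) + (b.length + 1) • eps k) =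
      Tdef φ b := by
  rw [Tdef_concat, mul_assoc, inv_mul_cancel₀ (C_add_nsmul_eps_ne_zero _ b.length.succ_ne_zero),
    mul_one]

theorem mmul_eq_properMmul_add {A : Type*} [Semiring A] (M N : List 𝒩 → A) (w : List 𝒩) :
    mmul M N w = properMmul M N w + M w * N [] := by
  rw [mmul, properMmul, sum_range_succ, List.take_length, List.drop_length]

theorem properMmul_concat {A : Type*} [Semiring A] (M N : List 𝒩 → A) (l : List 𝒩) (x : 𝒩) :
    properMmul M N (l ++ [x]) = ∑ q ∈ range (l.length + 1), M (l.take q) * N (l.drop q ++ [x]) := by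
  rw [properMmul, List.length_append, List.length_singleton]
  refine sum_congr rfl fun q hq => ?_
  have hq : q ≤ l.length := Nat.lt_succ_iff.1 (mem_range.1 hq)
  rw [List.take_append_of_le_length hq, List.drop_append_of_le_length hq]

end Moulds

section Birkhoff

variable {𝒩 k : Type*} [Field k] (φ : 𝒩 → k)

noncomputable def weightedT (m : ℕ) (b : List 𝒩) : LaurentSeries k :=
  Tdef φ b * (b.length • eps k) ^ m

theorem weightedT_zero : weightedT φ 0 = Tdef φ := by
  funext b
  rw [weightedT, pow_zero, mul_one]

theorem eventually_sum_mul_weightedT_mem {ι : Type*} (s : Finset ι) (U : ι → LaurentSeries k)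
    (b : ι → List 𝒩) :
    ∀ᶠ m in atTop, ∑ i ∈ s, U i * weightedT φ m (b i) ∈ powerSeries_as_subring k := by
  filter_upwards [(eventually_all_finset s).2 fun i _ =>
    eventually_mul_eps_pow_mem_powerSeries (U i * Tdef φ (b i))] with m hm
  refine sum_mem fun i hi => ?_
  rw [weightedT, smul_pow, mul_smul_comm, mul_smul_comm, ← mul_assoc]
  exact nsmul_mem (hm i hi) _

variable [CharZero k] {Um : List 𝒩 → LaurentSeries k}

theorem C_mul_properMmul_add_succ_mem {l : List 𝒩}
    (hvanish : ∀ p, p <+: l → phiw φ p ≠ 0 → Um p = 0)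
    (hweighted : ∀ m, mmul Um (weightedT φ m) l ∈ powerSeries_as_subring k) (x : 𝒩) (m : ℕ) :
    HahnSeries.C (phiw φ (l ++ [x])) * properMmul Um (weightedT φ m) (l ++ [x]) +
      properMmul Um (weightedT φ (m + 1)) (l ++ [x]) ∈ powerSeries_as_subring k := by
  set c := phiw φ (l ++ [x])
  have cancel_last_factor : ∀ q, Um (l.take q) * Tdef φ (l.drop q ++ [x]) *
      (HahnSeries.C c + ((l.drop q).length • eps k + eps k)) =
        Um (l.take q) * Tdef φ (l.drop q) := by
    intro q
    by_cases hq : phiw φ (l.take q) = 0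
    · have hc : phiw φ (l.drop q ++ [x]) = c := by
        rw [← zero_add (phiw φ _), ← hq, ← phiw_append, ← List.append_assoc, List.take_append_drop]
      rw [← succ_nsmul, ← hc, mul_assoc, Tdef_concat_mul]
    · rw [hvanish _ (List.take_prefix q l) hq, zero_mul, zero_mul, zero_mul]
  have : HahnSeries.C c * properMmul Um (weightedT φ m) (l ++ [x]) +
      properMmul Um (weightedT φ (m + 1)) (l ++ [x]) = ∑ q ∈ range (l.length + 1),
        Um (l.take q) * Tdef φ (l.drop q) * ((l.drop q).length • eps k + eps k) ^ m := by
    simp only [properMmul_concat, weightedT, List.length_append, List.length_singleton, succ_nsmul,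
      mul_sum, ← sum_add_distrib]
    refine sum_congr rfl fun q _ => ?_
    rw [← cancel_last_factor q]
    ring
  rw [this]
  refine (powerSeries_as_subring k).sum_mul_add_pow_mem _ _ _ eps_mem_powerSeries (fun i => ?_) m
  simpa only [mmul, weightedT, mul_assoc] using hweighted i

theorem vanish_on_prefixes_and_mmul_weightedT_mem {Up : List 𝒩 → LaurentSeries k}
    (hUm : ∀ n : List 𝒩, n ≠ [] → Kminus (Um n)) (hUp : ∀ n : List 𝒩, Kplus (Up n))
    (hEq : mmul Um (Tdef φ) = Up) (l : List 𝒩) :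
    (∀ p, p <+: l → phiw φ p ≠ 0 → Um p = 0) ∧
      ∀ m, mmul Um (weightedT φ m) l ∈ powerSeries_as_subring k := by
  have weight_zero : ∀ n, mmul Um (weightedT φ 0) n ∈ powerSeries_as_subring k := fun n => by
    rw [weightedT_zero, hEq, ← kplus_iff_mem_powerSeries]
    exact hUp n
  induction l using List.reverseRecOn with
  | nil =>
    refine ⟨fun p hp hφ => absurd ?_ hφ, fun m => ?_⟩
    · rw [List.prefix_nil.1 hp]
      rfl
    · cases m with
      | zero => exact weight_zero []
      | succ m => simp [mmul, weightedT]
  | append_singleton l x ih =>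
    obtain ⟨hvanish, hweighted⟩ := ih
    set Z := fun m => properMmul Um (weightedT φ m) (l ++ [x])
    have hrec := C_mul_properMmul_add_succ_mem φ hvanish hweighted x
    have hZ : phiw φ (l ++ [x]) ≠ 0 → ∀ m, Z m ∈ powerSeries_as_subring k := fun hc =>
      (powerSeries_as_subring k).mem_of_mul_add_succ_mem (C_mem_powerSeries (phiw φ (l ++ [x]))⁻¹)
        (by rw [← map_mul, inv_mul_cancel₀ hc, map_one]) hrec
        (eventually_sum_mul_weightedT_mem φ _ _ _)
    have hZsucc : ∀ m, Z (m + 1) ∈ powerSeries_as_subring k := fun m => by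
      by_cases hc : phiw φ (l ++ [x]) = 0
      · simpa only [hc, map_zero, zero_mul, zero_add] using hrec m
      · exact hZ hc (m + 1)
    refine ⟨fun p hp hφ => ?_, fun m => ?_⟩
    · rcases List.prefix_concat_iff.1 hp with rfl | hp
      · have hUm_eq : Um (l ++ [x]) = mmul Um (weightedT φ 0) (l ++ [x]) - Z 0 := by
          simp [mmul_eq_properMmul_add, Z, weightedT]
        refine eq_zero_of_kplus_of_kminus ?_ (hUm _ (by simp))
        rw [kplus_iff_mem_powerSeries, hUm_eq]
        exact sub_mem (weight_zero _) (hZ hφ 0)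
      · exact hvanish p hp hφ
    · cases m with
      | zero => exact weight_zero _
      | succ m => simpa [mmul_eq_properMmul_add, weightedT] using hZsucc m

end Birkhoff

theorem Uminus_and_R_vanish_on_nonresonant_general
    {𝒩 k : Type*} [Field k] [CharZero k] (φ : 𝒩 → k)
    (Um Up : List 𝒩 → LaurentSeries k)
    (hUm : ∀ n : List 𝒩, n ≠ [] → Kminus (Um n))
    (hUp : ∀ n : List 𝒩, Kplus (Up n))
    (hEq : mmul Um (Tdef φ) = Up)
    (R : List 𝒩 → k) (hR : R = fun n => -(n.length : k) * (Um n).coeff (-1)) :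
    ∀ n : List 𝒩, phiw φ n ≠ 0 → Um n = 0 ∧ R n = 0 := by
  intro n hn
  have hUm_n : Um n = 0 :=
    (vanish_on_prefixes_and_mmul_weightedT_mem φ hUm hUp hEq n).1 n (List.prefix_refl n) hn
  refine ⟨hUm_n, ?_⟩
  simp only [hR, hUm_n, HahnSeries.coeff_zero, mul_zero]

/-- with `(U₋, U₊)` the Birkhoff decomposition of `T` and
`R^n = −r(n) · (residue of U₋^n)`, every word `n` with `φ(n) ≠ 0` satisfies
`U₋^n = 0` and `R^n = 0`. -/
theorem Uminus_and_R_vanish_on_nonresonant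
    {𝒩 k : Type*} [Nonempty 𝒩] [Field k] [CharZero k] (φ : 𝒩 → k)
    (Um Up : List 𝒩 → LaurentSeries k)
    (hUm0 : Um [] = 1) (hUp0 : Up [] = 1)
    (hUm : ∀ n : List 𝒩, n ≠ [] → Kminus (Um n))
    (hUp : ∀ n : List 𝒩, Kplus (Up n))
    (hEq : mmul Um (Tdef φ) = Up)
    (R : List 𝒩 → k) (hR : R = fun n => -(n.length : k) * (Um n).coeff (-1)) :
    ∀ n : List 𝒩, phiw φ n ≠ 0 → Um n = 0 ∧ R n = 0 :=
  Uminus_and_R_vanish_on_nonresonant_general φ Um Up hUm hUp hEq R hR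
end

section
/- Let 𝒩 be a nonempty set and k a field of characteristic 0. For a k-valued mould S with S^∅ = 1, define the mould logarithm log S := Σ_{j≥1} ((−1)^{j−1}/j) (S − 𝟙)^{×j} (this is well-defined: on a word n̲ only the terms with j ≤ r(n̲) contribute, since (S−𝟙)^{×j} vanishes on words of length < j). If S is symmetral, then log S is alternal. -/
open scoped Classical

/-- Powers of a mould for mould multiplication. -/
noncomputable def mpow {𝒩 A : Type*} [Semiring A] (M : List 𝒩 → A) : ℕ → (List 𝒩 → A)
  | 0 => munit
  | j + 1 => mmul M (mpow M j)

/-- A mould `M` is symmetral if `M^∅ = 1` and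
`∑_n sh^{a,b}_n M^n = M^a M^b` for all nonempty words `a`, `b`. -/
def Symmetral {𝒩 A : Type*} [CommSemiring A] (M : List 𝒩 → A) : Prop :=
  M [] = 1 ∧ ∀ a b : List 𝒩, a ≠ [] → b ≠ [] →
    (∑ᶠ n : List 𝒩, (sh a b n : A) * M n) = M a * M b

/-- A mould `M` is alternal if `M^∅ = 0` and
`∑_n sh^{a,b}_n M^n = 0` for all nonempty words `a`, `b`. -/
def Alternal {𝒩 A : Type*} [CommSemiring A] (M : List 𝒩 → A) : Prop :=
  M [] = 0 ∧ ∀ a b : List 𝒩, a ≠ [] → b ≠ [] →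
    (∑ᶠ n : List 𝒩, (sh a b n : A) * M n) = 0

/-- The mould logarithm `log S = ∑_{j ≥ 1} ((−1)^{j−1}/j) (S − 𝟙)^{×j}`; on a word `n`
only the terms with `j ≤ r(n)` contribute (when `S^∅ = 1`, `(S − 𝟙)^{×j}` vanishes on
words of length `< j`), so it is given by the finite sum below. -/
noncomputable def mlog {𝒩 A : Type*} [Field A] (S : List 𝒩 → A) : List 𝒩 → A :=
  fun n => ∑ j ∈ Finset.Icc 1 n.length,
    ((-1 : A) ^ (j - 1) / (j : A)) * mpow (fun m => S m - munit m) j n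

/-!
Read `mcoprod M a b = ∑ₙ sh^{a,b}_n M^n` as the shuffle coproduct `Δ M` evaluated at `a ⊗ b`.
Deconcatenation is compatible with shuffling (`sh_append`), so `Δ` is multiplicative for mould
multiplication, and `S` symmetral means `Δ S = S ⊗ S`. For `T = S - 𝟙` this gives
`Δ T = x + y + x y` with the commuting elements `x = T ⊗ 𝟙`, `y = 𝟙 ⊗ T`, hence
`Δ (T^j) = w(x, y)^j` for `w = (1 + X) (1 + Y) - 1`, and on `a ⊗ b` with `N = r(a) + r(b)`,
`Δ (log S)` is `ℓ(x, y)` for `ℓ = ∑_{j ≤ N} (-1)^(j-1) w^j / j`. Up to degree `N`, `ℓ` agrees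
with `log ((1 + X) (1 + Y)) = log (1 + X) + log (1 + Y)`, so it has no mixed monomial `X^p Y^q`
(`p, q ≥ 1`) of degree `≤ N`; coefficientwise this follows from `(1 + X) ∂_X ℓ = 1 - (-w)^N`.
Pure powers of `x` or of `y` vanish on two nonempty words, and monomials of degree `> N` vanish
for length reasons.
-/

open Finset MvPolynomial

section Shuffle
variable {𝒩 : Type*}

lemma sh_nil_left (b n : List 𝒩) : sh [] b n = if b = n then 1 else 0 := by
  cases b <;> simp [sh]

lemma sh_nil_right (a n : List 𝒩) : sh a [] n = if a = n then 1 else 0 := by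
  cases a <;> simp [sh]

lemma sh_nil (a b : List 𝒩) : sh a b [] = if a = [] ∧ b = [] then 1 else 0 := by
  cases a <;> cases b <;> simp [sh]

lemma sh_cons (a b : List 𝒩) (z : 𝒩) (n : List 𝒩) :
    sh a b (z :: n) = (if a.head? = some z then sh a.tail b n else 0) +
      (if b.head? = some z then sh a b.tail n else 0) := by
  rcases a with _ | ⟨x, a⟩ <;> rcases b with _ | ⟨y, b⟩
  · simp [sh_nil_left]
  · simp [sh_nil_left, eq_comm (a := y), ite_and]
  · simp [sh_nil_right, eq_comm (a := x), ite_and]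
  · simp [sh]

lemma perm_append_of_sh_ne_zero {a b n : List 𝒩} (h : sh a b n ≠ 0) : n.Perm (a ++ b) := by
  induction n generalizing a b with
  | nil =>
    rw [sh_nil] at h
    aesop
  | cons z n ih =>
    rw [sh_cons] at h
    by_cases ha : a.head? = some z ∧ sh a.tail b n ≠ 0
    · obtain ⟨a', rfl⟩ : ∃ a', a = z :: a' := by
        cases a <;> simp_all
      exact (ih ha.2).cons z
    · obtain ⟨hb, hb'⟩ : b.head? = some z ∧ sh a b.tail n ≠ 0 := by
        by_contra
        simp_all
      obtain ⟨b', rfl⟩ : ∃ b', b = z :: b' := by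
        cases b <;> simp_all
      exact ((ih hb').cons z).trans List.perm_middle.symm

lemma sum_range_ite_head?_take {M : Type*} [AddCommMonoid M] (a : List 𝒩) (z : 𝒩)
    (f : List 𝒩 → List 𝒩 → M) :
    ∑ i ∈ range (a.length + 1),
        (if (a.take i).head? = some z then f (a.take i).tail (a.drop i) else 0) =
      if a.head? = some z then
        ∑ i ∈ range (a.tail.length + 1), f (a.tail.take i) (a.tail.drop i) else 0 := by
  cases a with
  | nil => simp
  | cons x a => simp [sum_range_succ' _ (a.length + 1)]

lemma sh_append (a b u v : List 𝒩) :
    sh a b (u ++ v) = ∑ i ∈ range (a.length + 1), ∑ j ∈ range (b.length + 1),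
      sh (a.take i) (b.take j) u * sh (a.drop i) (b.drop j) v := by
  induction u generalizing a b with
  | nil =>
    rw [sum_eq_single_of_mem 0 (by simp), sum_eq_single_of_mem 0 (by simp)]
    · simp [sh_nil]
    · intro j hj hj0
      have hb : b ≠ [] := by rintro rfl; simp_all
      simp [sh_nil, List.take_eq_nil_iff, hj0, hb]
    · intro i hi hi0
      have ha : a ≠ [] := by rintro rfl; simp_all
      simp [sh_nil, List.take_eq_nil_iff, hi0, ha]
  | cons z u ih =>
    simp only [List.cons_append, sh_cons, ih, add_mul, ite_mul, zero_mul, sum_add_distrib]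
    congr 1
    · simp only [sum_ite_irrel, sum_const_zero]
      exact (sum_range_ite_head?_take a z fun a₁ a₂ => ∑ j ∈ range (b.length + 1),
        sh a₁ (b.take j) u * sh a₂ (b.drop j) v).symm
    · rw [sum_comm]
      conv_rhs => rw [sum_comm]
      simp only [sum_ite_irrel, sum_const_zero]
      exact (sum_range_ite_head?_take b z fun b₁ b₂ => ∑ i ∈ range (a.length + 1),
        sh (a.take i) b₁ u * sh (a.drop i) b₂ v).symm

lemma perm_take_append_drop (a b : List 𝒩) (i j : ℕ) :
    (a.take i ++ b.take j ++ (a.drop i ++ b.drop j)).Perm (a ++ b) := by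
  conv_rhs => rw [← List.take_append_drop i a, ← List.take_append_drop j b]
  simp only [List.append_assoc]
  exact (List.perm_append_comm_assoc _ _ _).append_left _

end Shuffle

section Coproduct
variable {𝒩 A : Type*} [CommSemiring A]

noncomputable def mcoprod (M : List 𝒩 → A) (a b : List 𝒩) : A :=
  ∑ᶠ n, (sh a b n : A) * M n

lemma mcoprod_eq_sum (M : List 𝒩 → A) (a b : List 𝒩) :
    mcoprod M a b = ∑ n ∈ (a ++ b).permutations.toFinset, (sh a b n : A) * M n := by
  refine finsum_eq_sum_of_support_subset _ fun n hn => ?_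
  have hsh : sh a b n ≠ 0 := fun h => hn (by simp [h])
  simpa [List.mem_permutations] using perm_append_of_sh_ne_zero hsh

lemma mcoprod_nil_left (M : List 𝒩 → A) (b : List 𝒩) : mcoprod M [] b = M b := by
  rw [mcoprod, finsum_eq_single _ b fun n hn => by simp [sh_nil_left, Ne.symm hn]]
  simp [sh_nil_left]

lemma mcoprod_nil_right (M : List 𝒩 → A) (a : List 𝒩) : mcoprod M a [] = M a := by
  rw [mcoprod, finsum_eq_single _ a fun n hn => by simp [sh_nil_right, Ne.symm hn]]
  simp [sh_nil_right]

lemma mcoprod_munit (a b : List 𝒩) :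
    mcoprod (munit : List 𝒩 → A) a b = munit a * munit b := by
  rw [mcoprod, finsum_eq_single _ [] fun n hn => by simp [munit, hn]]
  by_cases ha : a = [] <;> simp [munit, sh_nil, ha]

lemma Symmetral.mcoprod_eq {S : List 𝒩 → A} (hS : Symmetral S) (a b : List 𝒩) :
    mcoprod S a b = S a * S b := by
  rcases eq_or_ne a [] with rfl | ha
  · rw [mcoprod_nil_left, hS.1, one_mul]
  rcases eq_or_ne b [] with rfl | hb
  · rw [mcoprod_nil_right, hS.1, mul_one]
  exact hS.2 a b ha hb

lemma sum_permutations_mmul {x y : List 𝒩} {F G : List 𝒩 → A}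
    (hF : ∀ u, F u ≠ 0 → u.Perm x) (hG : ∀ v, G v ≠ 0 → v.Perm y) :
    ∑ n ∈ (x ++ y).permutations.toFinset, mmul F G n =
      (∑ u ∈ x.permutations.toFinset, F u) * ∑ v ∈ y.permutations.toFinset, G v := by
  rw [sum_mul_sum, ← sum_product']
  simp only [mmul]
  rw [sum_sigma']
  symm
  refine sum_bij_ne_zero (fun p _ _ => ⟨p.1 ++ p.2, p.1.length⟩) ?_ ?_ ?_ ?_
  · intro p hp _
    simp_all [List.mem_permutations, List.Perm.append]
  · intro p _ _ q _ _ h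
    simp only [Sigma.mk.injEq, heq_eq_eq] at h
    exact Prod.ext (List.append_inj h.1 h.2).1 (List.append_inj h.1 h.2).2
  · rintro ⟨n, κ⟩ hκ hne
    simp only [mem_sigma, mem_range] at hκ
    refine ⟨(n.take κ, n.drop κ), ?_, hne, ?_⟩
    · simp only [mem_product, List.mem_toFinset, List.mem_permutations]
      exact ⟨hF _ (left_ne_zero_of_mul hne), hG _ (right_ne_zero_of_mul hne)⟩
    · simp [Nat.min_eq_left (Nat.lt_succ_iff.mp hκ.2)]
  · intro p _ _
    simp

lemma mcoprod_mmul (M N : List 𝒩 → A) (a b : List 𝒩) :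
    mcoprod (mmul M N) a b = ∑ i ∈ range (a.length + 1), ∑ j ∈ range (b.length + 1),
      mcoprod M (a.take i) (b.take j) * mcoprod N (a.drop i) (b.drop j) := by
  have hsplit : ∀ n, (sh a b n : A) * mmul M N n =
      ∑ i ∈ range (a.length + 1), ∑ j ∈ range (b.length + 1),
        mmul (fun u => (sh (a.take i) (b.take j) u : A) * M u)
          (fun v => (sh (a.drop i) (b.drop j) v : A) * N v) n := by
    intro n
    calc (sh a b n : A) * mmul M N n
        = ∑ κ ∈ range (n.length + 1),
            (sh a b (n.take κ ++ n.drop κ) : A) * (M (n.take κ) * N (n.drop κ)) := by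
          simp [mmul, mul_sum]
      _ = ∑ κ ∈ range (n.length + 1),
            ∑ i ∈ range (a.length + 1), ∑ j ∈ range (b.length + 1),
            (sh (a.take i) (b.take j) (n.take κ) : A) * M (n.take κ) *
              ((sh (a.drop i) (b.drop j) (n.drop κ) : A) * N (n.drop κ)) := by
          simp only [sh_append, Nat.cast_sum, Nat.cast_mul, sum_mul]
          refine sum_congr rfl fun _ _ => sum_congr rfl fun _ _ => sum_congr rfl fun _ _ => ?_
          ring
      _ = _ := by
          rw [sum_comm]
          exact sum_congr rfl fun _ _ => sum_comm
  rw [mcoprod_eq_sum, sum_congr rfl fun n _ => hsplit n, sum_comm]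
  refine sum_congr rfl fun i _ => ?_
  rw [sum_comm]
  refine sum_congr rfl fun j _ => ?_
  have hperm : (a ++ b).permutations.toFinset =
      (a.take i ++ b.take j ++ (a.drop i ++ b.drop j)).permutations.toFinset :=
    List.toFinset_eq_of_perm _ _ (perm_take_append_drop a b i j).symm.permutations
  rw [hperm, sum_permutations_mmul, mcoprod_eq_sum, mcoprod_eq_sum]
  · exact fun u hu => perm_append_of_sh_ne_zero fun h => hu (by simp [h])
  · exact fun v hv => perm_append_of_sh_ne_zero fun h => hv (by simp [h])

end Coproduct

section Powers
variable {𝒩 A : Type*} [Semiring A]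

lemma munit_mmul (M : List 𝒩 → A) : mmul munit M = M := by
  funext n
  simp only [mmul]
  rw [sum_eq_single_of_mem 0 (by simp)]
  · simp [munit]
  · intro i hi hi0
    have hn : n ≠ [] := by rintro rfl; simp_all
    simp [munit, List.take_eq_nil_iff, hi0, hn]

lemma mpow_apply_eq_zero_of_length_lt {T : List 𝒩 → A} (hT : T [] = 0) {j : ℕ}
    {w : List 𝒩} (h : w.length < j) : mpow T j w = 0 := by
  induction j generalizing w with
  | zero => omega
  | succ j ih =>
    simp only [mpow, mmul]
    refine sum_eq_zero fun i hi => ?_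
    rcases i with _ | i
    · simp [hT]
    · rw [ih (by simp at hi ⊢; omega), mul_zero]

end Powers

-- `(1 + X 0) * (1 + X 1) - 1`; `evalPowPair` sends `X 0` to `T ⊗ 𝟙` and `X 1` to `𝟙 ⊗ T`.
noncomputable def coprodPoly (R : Type*) [CommSemiring R] : MvPolynomial (Fin 2) R :=
  X 0 + X 1 + X 0 * X 1

section EvalPowPair
variable {𝒩 A : Type*} [CommSemiring A]

noncomputable def evalPowPair (T : List 𝒩 → A) (a b : List 𝒩) :
    MvPolynomial (Fin 2) A →ₗ[A] A :=
  (basisMonomials (Fin 2) A).constr A fun s => mpow T (s 0) a * mpow T (s 1) b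

lemma evalPowPair_monomial (T : List 𝒩 → A) (a b : List 𝒩) (s : Fin 2 →₀ ℕ) (c : A) :
    evalPowPair T a b (monomial s c) = c * (mpow T (s 0) a * mpow T (s 1) b) := by
  rw [← mul_one c, ← smul_eq_mul, ← smul_monomial, map_smul, evalPowPair,
    show monomial s (1 : A) = basisMonomials (Fin 2) A s by simp [coe_basisMonomials],
    Module.Basis.constr_basis, smul_eq_mul, smul_eq_mul, mul_one]

lemma sum_mul_evalPowPair (T : List 𝒩 → A) (a b : List 𝒩) (P : MvPolynomial (Fin 2) A) :
    ∑ i ∈ range (a.length + 1), ∑ j ∈ range (b.length + 1),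
        (T (a.take i) * T (b.take j) + T (a.take i) * munit (b.take j) +
          munit (a.take i) * T (b.take j)) * evalPowPair T (a.drop i) (b.drop j) P =
      evalPowPair T a b (coprodPoly A * P) := by
  induction P using MvPolynomial.induction_on' with
  | add P Q hP hQ => simp only [map_add, mul_add, sum_add_distrib, hP, hQ]
  | monomial s c =>
    have hsucc (p : ℕ) (w : List 𝒩) :
        mpow T (p + 1) w = ∑ i ∈ range (w.length + 1), T (w.take i) * mpow T p (w.drop i) := rfl
    have hunit (p : ℕ) (w : List 𝒩) :
        mpow T p w = ∑ i ∈ range (w.length + 1), munit (w.take i) * mpow T p (w.drop i) :=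
      (congrFun (munit_mmul (mpow T p)) w).symm
    simp only [coprodPoly, add_mul, X, monomial_mul, map_add, evalPowPair_monomial]
    simp only [Finsupp.coe_add, Pi.add_apply, Finsupp.single_eq_same, ne_eq, zero_ne_one,
      not_false_eq_true, Finsupp.single_eq_of_ne, one_ne_zero, one_mul, zero_add, add_zero]
    rw [add_comm 1 (s 0), add_comm 1 (s 1), hsucc (s 0) a, hsucc (s 1) b,
      hunit (s 0) a, hunit (s 1) b]
    rw [sum_mul_sum, sum_mul_sum, sum_mul_sum]
    simp only [mul_sum, ← sum_add_distrib]
    exact sum_congr rfl fun i _ => sum_congr rfl fun j _ => by ring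

end EvalPowPair

section Symmetral
variable {𝒩 A : Type*} [CommRing A]

lemma mcoprod_sub (M N : List 𝒩 → A) (a b : List 𝒩) :
    mcoprod (fun n => M n - N n) a b = mcoprod M a b - mcoprod N a b := by
  simp only [mcoprod_eq_sum, mul_sub, sum_sub_distrib]

lemma Symmetral.mcoprod_sub_munit {S : List 𝒩 → A} (hS : Symmetral S) (u v : List 𝒩) :
    mcoprod (fun n => S n - munit n) u v =
      (S u - munit u) * (S v - munit v) + (S u - munit u) * munit v +
        munit u * (S v - munit v) := by
  rw [mcoprod_sub, hS.mcoprod_eq, mcoprod_munit]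
  ring

lemma Symmetral.mcoprod_mpow {S : List 𝒩 → A} (hS : Symmetral S) (j : ℕ) (a b : List 𝒩) :
    mcoprod (mpow (fun n => S n - munit n) j) a b =
      evalPowPair (fun n => S n - munit n) a b (coprodPoly A ^ j) := by
  induction j generalizing a b with
  | zero =>
    rw [pow_zero, one_def, evalPowPair_monomial, one_mul]
    exact mcoprod_munit a b
  | succ j ih =>
    simp only [mpow, mcoprod_mmul, hS.mcoprod_sub_munit, ih, pow_succ']
    exact sum_mul_evalPowPair (fun n => S n - munit n) a b _

end Symmetral

lemma coeff_one_add_X_mul_pderiv {σ R : Type*} [CommSemiring R] (i : σ)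
    (f : MvPolynomial σ R) (s : σ →₀ ℕ) :
    coeff s ((1 + X i) * pderiv i f) =
      coeff (s + Finsupp.single i 1) f * (s i + 1) + coeff s f * s i := by
  rw [add_mul, one_mul, coeff_add, coeff_pderiv, coeff_X_mul', coeff_pderiv]
  split_ifs with hi
  · have h1 : 1 ≤ s i := Nat.one_le_iff_ne_zero.2 (Finsupp.mem_support_iff.1 hi)
    rw [tsub_add_cancel_of_le (Finsupp.single_le_iff.2 h1), Finsupp.tsub_apply,
      Finsupp.single_eq_same, ← Nat.cast_add_one (s i - 1), Nat.sub_add_cancel h1]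
  · simp_all

lemma coeff_pow_eq_zero_of_degree_lt {σ R : Type*} [CommSemiring R] {p : MvPolynomial σ R}
    (hp : p ∈ idealOfVars σ R) {N : ℕ} {s : σ →₀ ℕ} (hs : s.degree < N) :
    coeff s (p ^ N) = 0 :=
  (mem_pow_idealOfVars_iff' N _).1 (Ideal.pow_mem_pow hp N) s hs

lemma coprodPoly_mem_idealOfVars (R : Type*) [CommSemiring R] :
    coprodPoly R ∈ idealOfVars (Fin 2) R := by
  have hX (i : Fin 2) : X i ∈ idealOfVars (Fin 2) R := Ideal.subset_span ⟨i, rfl⟩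
  exact add_mem (add_mem (hX 0) (hX 1)) (Ideal.mul_mem_right _ _ (hX 0))

section TruncLog
variable {k : Type*} [Field k] [CharZero k]

noncomputable def truncLog (N : ℕ) : MvPolynomial (Fin 2) k :=
  ∑ j ∈ Icc 1 N, C ((-1 : k) ^ (j - 1) / j) * coprodPoly k ^ j

lemma one_add_X_mul_pderiv_truncLog (N : ℕ) :
    (1 + X 0) * pderiv 0 (truncLog N : MvPolynomial (Fin 2) k) = 1 - (-coprodPoly k) ^ N := by
  have hw : pderiv 0 (coprodPoly k) = 1 + X 1 := by simp [coprodPoly]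
  have hterm : ∀ j ∈ Icc 1 N,
      (1 + X 0) * pderiv 0 (C ((-1 : k) ^ (j - 1) / j) * coprodPoly k ^ j) =
      (-coprodPoly k) ^ (j - 1) * (1 - -coprodPoly k) := by
    intro j hj
    have hj : (j : k) ≠ 0 := Nat.cast_ne_zero.2 (by simp at hj; omega)
    have hc : C ((-1 : k) ^ (j - 1) / j) * (j : MvPolynomial (Fin 2) k) = (-1) ^ (j - 1) := by
      rw [← map_natCast C, ← C_mul, div_mul_cancel₀ _ hj, map_pow, map_neg, map_one]
    rw [pderiv_C_mul, pderiv_pow, hw, neg_pow (coprodPoly k)]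
    calc (1 + X 0) * (C ((-1 : k) ^ (j - 1) / j) *
          ((j : MvPolynomial (Fin 2) k) * coprodPoly k ^ (j - 1) * (1 + X 1)))
        = C ((-1 : k) ^ (j - 1) / j) * (j : MvPolynomial (Fin 2) k) * coprodPoly k ^ (j - 1) *
            ((1 + X 0) * (1 + X 1)) := by ring
      _ = _ := by rw [hc, coprodPoly]; ring
  rw [truncLog, map_sum, mul_sum, sum_congr rfl hterm, ← sum_mul, ← geom_sum_mul_neg]
  congr 1
  exact sum_nbij' (· - 1) (· + 1) (fun j hj => by simp at hj ⊢; omega)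
    (fun i hi => by simp at hi ⊢; omega) (fun j hj => by simp at hj; omega) (fun _ _ => rfl)
    fun _ _ => rfl

lemma coeff_truncLog_recurrence {N p q : ℕ} (hq : 1 ≤ q) (hN : p + q < N) :
    coeff (Finsupp.single 0 (p + 1) + Finsupp.single 1 q) (truncLog N : MvPolynomial (Fin 2) k) *
        (p + 1) + coeff (Finsupp.single 0 p + Finsupp.single 1 q) (truncLog N) * p = 0 := by
  have h := coeff_one_add_X_mul_pderiv 0 (truncLog N : MvPolynomial (Fin 2) k)
    (Finsupp.single 0 p + Finsupp.single 1 q)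
  have hne : (0 : Fin 2 →₀ ℕ) ≠ Finsupp.single 0 p + Finsupp.single 1 q := fun h0 => by
    have := congrArg (· 1) h0
    simp at this
    omega
  have hshift : Finsupp.single 0 p + Finsupp.single 1 q + Finsupp.single 0 1 =
      Finsupp.single (0 : Fin 2) (p + 1) + Finsupp.single 1 q := by
    rw [add_right_comm, ← Finsupp.single_add]
  rw [one_add_X_mul_pderiv_truncLog, coeff_sub, coeff_one, if_neg hne,
    coeff_pow_eq_zero_of_degree_lt (neg_mem (coprodPoly_mem_idealOfVars k))
      (by simpa [Finsupp.degree_eq_sum] using hN), sub_zero, hshift] at h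
  simpa using h.symm

lemma coeff_truncLog_eq_zero {N p q : ℕ} (hp : 1 ≤ p) (hq : 1 ≤ q) (hN : p + q ≤ N) :
    coeff (Finsupp.single 0 p + Finsupp.single 1 q) (truncLog N : MvPolynomial (Fin 2) k) = 0 := by
  obtain ⟨p, rfl⟩ : ∃ p', p = p' + 1 := ⟨p - 1, by omega⟩
  induction p with
  | zero => simpa using coeff_truncLog_recurrence (k := k) (N := N) (p := 0) hq (by omega)
  | succ p ih =>
    have h := coeff_truncLog_recurrence (k := k) (N := N) (p := p + 1) hq (by omega)
    rw [ih (by omega) (by omega), zero_mul, add_zero] at h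
    exact (mul_eq_zero.1 h).resolve_right (Nat.cast_add_one_ne_zero _)

end TruncLog

section Logarithm
variable {𝒩 k : Type*} [Field k] [CharZero k]

lemma evalPowPair_truncLog_eq_zero {T : List 𝒩 → k} (hT : T [] = 0) {a b : List 𝒩}
    (ha : a ≠ []) (hb : b ≠ []) : evalPowPair T a b (truncLog (a.length + b.length)) = 0 := by
  rw [as_sum (truncLog _), map_sum]
  refine sum_eq_zero fun s _ => ?_
  rw [evalPowPair_monomial]
  rcases Nat.eq_zero_or_pos (s 0) with h0 | h0
  · simp [h0, mpow, munit, ha]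
  rcases Nat.eq_zero_or_pos (s 1) with h1 | h1
  · simp [h1, mpow, munit, hb]
  by_cases hsa : a.length < s 0
  · rw [mpow_apply_eq_zero_of_length_lt hT hsa, zero_mul, mul_zero]
  by_cases hsb : b.length < s 1
  · rw [mpow_apply_eq_zero_of_length_lt hT hsb, mul_zero, mul_zero]
  have hs : Finsupp.single 0 (s 0) + Finsupp.single 1 (s 1) = s := by
    ext i
    fin_cases i <;> simp
  rw [← hs, coeff_truncLog_eq_zero h0 h1 (by omega), zero_mul]

lemma mcoprod_mlog (S : List 𝒩 → k) (a b : List 𝒩) :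
    mcoprod (mlog S) a b = ∑ j ∈ Icc 1 (a.length + b.length),
      (-1 : k) ^ (j - 1) / j * mcoprod (mpow (fun n => S n - munit n) j) a b := by
  simp only [mcoprod_eq_sum, mul_sum]
  rw [sum_comm]
  refine sum_congr rfl fun n hn => ?_
  have hlen : n.length = a.length + b.length := by
    simp only [List.mem_toFinset, List.mem_permutations] at hn
    rw [hn.length_eq, List.length_append]
  rw [mlog, hlen, mul_sum]
  exact sum_congr rfl fun j _ => by ring

end Logarithm

theorem mlog_symmetral_alternal_general
    {𝒩 k : Type*} [Field k] [CharZero k]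
    (S : List 𝒩 → k) (hS : Symmetral S) :
    Alternal (mlog S) := by
  refine ⟨by simp [mlog], fun a b ha hb => ?_⟩
  change mcoprod (mlog S) a b = 0
  rw [mcoprod_mlog, ← evalPowPair_truncLog_eq_zero (T := fun n => S n - munit n)
    (by simp [munit, hS.1]) ha hb, truncLog, map_sum]
  refine sum_congr rfl fun j _ => ?_
  rw [hS.mcoprod_mpow, C_mul', map_smul, smul_eq_mul]

/-- the mould logarithm of a symmetral mould is alternal. -/
theorem mlog_symmetral_alternal
    {𝒩 k : Type*} [Nonempty 𝒩] [Field k] [CharZero k]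
    (S : List 𝒩 → k) (hS0 : S [] = 1) (hS : Symmetral S) :
    Alternal (mlog S) :=
  mlog_symmetral_alternal_general S hS
end
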